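/- Assume that (α, α^q, α^(q^2)) is a linearly independent family over K. Then every polynomial T₀ ∈ MvPolynomial (Fin 3) K satisfying MvPolynomial.map (algebraMap K L) T₀ = T is irreducible in MvPolynomial (Fin 3) K. -/

import Mathlib

/-!
Over `L` the cubic `T` is the product of the linear forms `x'`, `y'`, `z'`, which are prime.
If `T₀ = A * B` with non-units `A`, `B` over `K`, their base changes are non-units too, so one of
them is associated to a single form `ℓ` among these; then all coefficients of `ℓ` lie in `d • K`
for one `d ∈ L`. But each form has `α` and `α ^ q` among its coefficients, and these are linearly
independent over `K`.
-/

open MvPolynomial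

/-- The linear form x' = α•x + α^q•y + α^(q²)•z. -/
noncomputable def xLin (L : Type*) [CommRing L] (q : ℕ) (α : L) : MvPolynomial (Fin 3) L :=
  α • X 0 + α ^ q • X 1 + α ^ q ^ 2 • X 2

/-- The linear form y' = α^q•x + α^(q²)•y + α•z. -/
noncomputable def yLin (L : Type*) [CommRing L] (q : ℕ) (α : L) : MvPolynomial (Fin 3) L :=
  α ^ q • X 0 + α ^ q ^ 2 • X 1 + α • X 2

/-- The linear form z' = α^(q²)•x + α•y + α^q•z. -/
noncomputable def zLin (L : Type*) [CommRing L] (q : ℕ) (α : L) : MvPolynomial (Fin 3) L :=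
  α ^ q ^ 2 • X 0 + α • X 1 + α ^ q • X 2

/-- F = x'² * y'. -/
noncomputable def Fcub (L : Type*) [CommRing L] (q : ℕ) (α : L) : MvPolynomial (Fin 3) L :=
  xLin L q α ^ 2 * yLin L q α

/-- G = y'² * z'. -/
noncomputable def Gcub (L : Type*) [CommRing L] (q : ℕ) (α : L) : MvPolynomial (Fin 3) L :=
  yLin L q α ^ 2 * zLin L q α

/-- H = z'² * x'. -/
noncomputable def Hcub (L : Type*) [CommRing L] (q : ℕ) (α : L) : MvPolynomial (Fin 3) L :=
  zLin L q α ^ 2 * xLin L q α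

/-- T = x' * y' * z'. -/
noncomputable def Tcub (L : Type*) [CommRing L] (q : ℕ) (α : L) : MvPolynomial (Fin 3) L :=
  xLin L q α * yLin L q α * zLin L q α

theorem exists_associated_of_mul_eq_mul_mul {M : Type*} [CommMonoidWithZero M] [IsCancelMulZero M]
    {p q r a b : M} (hp : Prime p) (hq : Prime q) (hr : Irreducible r) (h : a * b = p * q * r)
    (ha : ¬IsUnit a) (hb : ¬IsUnit b) :
    ∃ s ∈ ({p, q, r} : Set M), Associated a s ∨ Associated b s := by
  wlog hpa : p ∣ a generalizing a b
  · have hpb : p ∣ b := (hp.dvd_or_dvd ⟨q * r, by rw [h, mul_assoc]⟩).resolve_left hpa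
    obtain ⟨s, hs, hba⟩ := this (by rw [mul_comm, h]) hb ha hpb
    exact ⟨s, hs, hba.symm⟩
  obtain ⟨a₁, rfl⟩ := hpa
  have h₁ : a₁ * b = q * r := mul_left_cancel₀ hp.ne_zero (by rw [← mul_assoc, h, mul_assoc])
  rcases hq.dvd_or_dvd ⟨r, h₁⟩ with ⟨a₂, rfl⟩ | ⟨b₁, rfl⟩
  · have h₂ : r = a₂ * b := (mul_left_cancel₀ hq.ne_zero (by rw [← mul_assoc, h₁])).symm
    have ha₂ : IsUnit a₂ := (hr.isUnit_or_isUnit h₂).resolve_right hb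
    exact ⟨r, by simp, Or.inr (h₂ ▸ (associated_unit_mul_left b a₂ ha₂).symm)⟩
  · have h₂ : r = a₁ * b₁ := (mul_left_cancel₀ hq.ne_zero (by rw [mul_left_comm, h₁])).symm
    rcases hr.isUnit_or_isUnit h₂ with ha₁ | hb₁
    · exact ⟨p, by simp, Or.inl (associated_mul_unit_left p a₁ ha₁)⟩
    · exact ⟨q, by simp, Or.inr (associated_mul_unit_left q b₁ hb₁)⟩

namespace MvPolynomial

variable {σ K L : Type*} [Field K]

theorem isUnit_of_isUnit_map [CommRing L] [IsDomain L] {f : K →+* L} {g : MvPolynomial σ K}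
    (hg : IsUnit (map f g)) : IsUnit g := by
  obtain ⟨r, hr, hgr⟩ := isUnit_iff_eq_C_of_isReduced.mp hg
  have hgC : g = C (coeff 0 g) :=
    map_injective f f.injective (by rw [map_C, ← coeff_map, hgr, coeff_zero_C])
  have hg0 : coeff 0 g ≠ 0 := by
    rintro h0
    rw [hgC, h0] at hgr
    exact hr.ne_zero (by simpa using hgr.symm)
  exact hgC ▸ (isUnit_iff_ne_zero.mpr hg0).map C

theorem irreducible_of_map_eq_mul_mul [CommRing L] [IsDomain L] {f : K →+* L} {T : MvPolynomial σ K}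
    {p q r : MvPolynomial σ L} (hp : Prime p) (hq : Prime q) (hr : Prime r)
    (hT : map f T = p * q * r)
    (hdesc : ∀ g : MvPolynomial σ K, ∀ s ∈ ({p, q, r} : Set _), ¬Associated (map f g) s) :
    Irreducible T where
  not_isUnit hTu := hp.not_isUnit
    (isUnit_of_mul_isUnit_left (isUnit_of_mul_isUnit_left (hT ▸ hTu.map (map f))))
  isUnit_or_isUnit a b hab := by
    by_contra! hnu
    obtain ⟨s, hs, has | hbs⟩ := exists_associated_of_mul_eq_mul_mul hp hq hr.irreducible
      (by rw [← map_mul, ← hab, hT]) (mt isUnit_of_isUnit_map hnu.1)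
      (mt isUnit_of_isUnit_map hnu.2)
    · exact hdesc a s hs has
    · exact hdesc b s hs hbs

theorem coeff_single_sum_smul_X [Fintype σ] [CommSemiring L] (c : σ → L) (i : σ) :
    coeff (Finsupp.single i 1) (∑ j, c j • X j : MvPolynomial σ L) = c i := by
  classical
  simp [coeff_sum, coeff_X, Finsupp.single_left_inj]

theorem prime_sum_smul_X [Fintype σ] [Field L] {c : σ → L} (hc : c ≠ 0) :
    Prime (∑ i, c i • X i : MvPolynomial σ L) := by
  have hsum : (∑ i, c i • X i : MvPolynomial σ L) = sumSMulX (Finsupp.equivFunOnFinite.symm c) := by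
    simp [sumSMulX, Finsupp.linearCombination_apply, Finsupp.sum_fintype]
  rw [hsum]
  refine (irreducible_sumSMulX _ ?_ fun r hr => ?_).prime
  · simpa [Finsupp.support_nonempty_iff] using hc
  · obtain ⟨i, hi⟩ := Function.ne_iff.mp hc
    exact isUnit_iff_ne_zero.mpr (by rintro rfl; exact hi (zero_dvd_iff.mp (hr i)))

theorem exists_eq_mul_of_associated_map_sum_smul_X [Fintype σ] [CommRing L] [IsReduced L] {f : K →+* L}
    {g : MvPolynomial σ K} {c : σ → L} (h : Associated (map f g) (∑ i, c i • X i)) :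
    ∃ d : L, ∀ i, c i = d * f (coeff (Finsupp.single i 1) g) := by
  obtain ⟨u, hu⟩ := h
  obtain ⟨d, -, hud⟩ := isUnit_iff_eq_C_of_isReduced.mp u.isUnit
  refine ⟨d, fun i => ?_⟩
  rw [← coeff_single_sum_smul_X c i, ← hu, hud, mul_comm, coeff_C_mul, coeff_map]

theorem not_associated_map_sum_smul_X [Fintype σ] [CommRing L] [IsReduced L] [Algebra K L] {c : σ → L} {i j : σ}
    (hc : LinearIndependent K ![c i, c j]) (g : MvPolynomial σ K) :
    ¬Associated (map (algebraMap K L) g) (∑ k, c k • X k) := by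
  intro h
  obtain ⟨d, hd⟩ := exists_eq_mul_of_associated_map_sum_smul_X h
  have hci := hd i
  have hcj := hd j
  set a := coeff (Finsupp.single i 1) g
  set b := coeff (Finsupp.single j 1) g
  have hba : b • c i = a • c j := by
    rw [hci, hcj, Algebra.smul_def, Algebra.smul_def]
    ring
  obtain ⟨hb, -⟩ := hc.eq_zero_of_pair' hba
  exact hc.ne_zero 1 (by simpa [hb] using hcj)

end MvPolynomial

theorem xLin_eq_sum (L : Type*) [CommRing L] (q : ℕ) (α : L) :
    xLin L q α = ∑ i, ![α, α ^ q, α ^ q ^ 2] i • X i := by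
  simp [xLin, Fin.sum_univ_three]

theorem yLin_eq_sum (L : Type*) [CommRing L] (q : ℕ) (α : L) :
    yLin L q α = ∑ i, ![α ^ q, α ^ q ^ 2, α] i • X i := by
  simp [yLin, Fin.sum_univ_three]

theorem zLin_eq_sum (L : Type*) [CommRing L] (q : ℕ) (α : L) :
    zLin L q α = ∑ i, ![α ^ q ^ 2, α, α ^ q] i • X i := by
  simp [zLin, Fin.sum_univ_three]

theorem stmt_6_general (K L : Type*) [Field K] [Fintype K] [Field L] [Algebra K L] (α : L)
    (hli : LinearIndependent K ![α, α ^ Fintype.card K, α ^ Fintype.card K ^ 2]) :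
    ∀ T₀ : MvPolynomial (Fin 3) K,
      MvPolynomial.map (algebraMap K L) T₀ = Tcub L (Fintype.card K) α →
      Irreducible T₀ := by
  intro T₀ hT₀
  set q := Fintype.card K
  have hpair : LinearIndependent K ![α, α ^ q] := by
    convert hli.comp ![0, 1] (by decide) using 1
    ext i; fin_cases i <;> rfl
  have hα : α ≠ 0 := hpair.ne_zero 0
  refine irreducible_of_map_eq_mul_mul (prime_sum_smul_X fun h => hα (congrFun h 0))
    (prime_sum_smul_X fun h => hα (congrFun h 2)) (prime_sum_smul_X fun h => hα (congrFun h 1))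
    (by rw [hT₀, Tcub, xLin_eq_sum, yLin_eq_sum, zLin_eq_sum]) ?_
  rintro g s (rfl | rfl | rfl)
  · exact not_associated_map_sum_smul_X (i := 0) (j := 1) (by exact hpair) g
  · exact not_associated_map_sum_smul_X (i := 2) (j := 0) (by exact hpair) g
  · exact not_associated_map_sum_smul_X (i := 1) (j := 2) (by exact hpair) g

theorem stmt_6 (K L : Type*) [Field K] [Fintype K] [Field L] [Fintype L] [Algebra K L]
    (hrank : Module.finrank K L = 3) (α : L)
    (hli : LinearIndependent K ![α, α ^ Fintype.card K, α ^ Fintype.card K ^ 2]) :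
    ∀ T₀ : MvPolynomial (Fin 3) K,
      MvPolynomial.map (algebraMap K L) T₀ = Tcub L (Fintype.card K) α →
      Irreducible T₀ :=
  stmt_6_general K L α hli
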